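/- Let F : [-1,1] → [0,∞) be continuous on [-1,1], three times continuously differentiable on (-1,1), with F'(0) = 0, F''(r) ≥ -K for some K > 0 and all r ∈ (-1,1), and F'(r) → ±∞ as r → (±1)∓. Then there exist constants C₀, C₁ > 0 such that F'(r)·r ≥ C₀ r² - C₁ for all r ∈ (-1,1). -/

import Mathlib

open Set Filter Topology

/-! The function `r ↦ F' r * r - r ^ 2` is continuous on `(-1, 1)` and tends to `+∞` at both
barriers, since `F' → ±∞` there while `r → ±1`; hence it attains a minimum `m`, and one may take
`C₀ = 1`, `C₁ = |m| + 1`. -/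

instance Set.OrdConnected.compactIccSpace {X : Type*} [Preorder X] [TopologicalSpace X]
    [CompactIccSpace X] (s : Set X) [s.OrdConnected] : CompactIccSpace s :=
  ⟨fun {x y} => Subtype.isCompact_iff.2 (by rw [image_subtype_val_Icc]; exact isCompact_Icc)⟩

theorem ContinuousOn.exists_isMinOn_Ioo_of_tendsto_atTop
    {X α : Type*} [ConditionallyCompleteLinearOrder X] [DenselyOrdered X] [TopologicalSpace X]
    [OrderTopology X] [LinearOrder α] [TopologicalSpace α] [ClosedIicTopology α]
    {a b : X} (hab : a < b) {f : X → α} (hf : ContinuousOn f (Ioo a b))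
    (ha : Tendsto f (𝓝[>] a) atTop) (hb : Tendsto f (𝓝[<] b) atTop) :
    ∃ x ∈ Ioo a b, IsMinOn f (Ioo a b) x := by
  have : Nonempty (Ioo a b) := (nonempty_Ioo.2 hab).to_subtype
  have hlim : Tendsto (fun x : Ioo a b => f x) (cocompact (Ioo a b)) atTop :=
    (((tendsto_comp_coe_Ioo_atBot hab).2 ha).sup ((tendsto_comp_coe_Ioo_atTop hab).2 hb)).mono_left
      cocompact_le_atBot_atTop
  obtain ⟨x, hx⟩ := hf.domRestrict.exists_forall_le hlim
  exact ⟨x, x.2, fun y hy => hx ⟨y, hy⟩⟩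

theorem stmt_1_general (F' F'' : ℝ → ℝ)
    (hd2 : ∀ r ∈ Ioo (-1:ℝ) 1, HasDerivAt F' (F'' r) r)
    (htop : Tendsto F' (nhdsWithin 1 (Iio 1)) atTop)
    (hbot : Tendsto F' (nhdsWithin (-1) (Ioi (-1))) atBot) :
    ∃ C₀ > (0:ℝ), ∃ C₁ > (0:ℝ), ∀ r ∈ Ioo (-1:ℝ) 1, F' r * r ≥ C₀ * r^2 - C₁ := by
  set g : ℝ → ℝ := fun r => F' r * r - r ^ 2 with hg
  have hsq : ∀ x : ℝ, Tendsto (fun r : ℝ => -r ^ 2) (𝓝 x) (𝓝 (-x ^ 2)) := fun x =>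
    (continuous_pow 2).neg.tendsto x
  have hcont : ContinuousOn g (Ioo (-1) 1) :=
    (ContinuousOn.mul (fun r hr => (hd2 r hr).continuousAt.continuousWithinAt) continuousOn_id).sub
      (continuousOn_pow 2)
  have hright : Tendsto g (𝓝[<] 1) atTop := by
    simpa only [hg, sub_eq_add_neg, id_eq] using
      (htop.atTop_mul_pos one_pos (tendsto_id.mono_left nhdsWithin_le_nhds)).atTop_add
        ((hsq 1).mono_left nhdsWithin_le_nhds)
  have hleft : Tendsto g (𝓝[>] (-1)) atTop := by
    simpa only [hg, sub_eq_add_neg, id_eq] using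
      (hbot.atBot_mul_neg neg_one_lt_zero (tendsto_id.mono_left nhdsWithin_le_nhds)).atTop_add
        ((hsq (-1)).mono_left nhdsWithin_le_nhds)
  obtain ⟨x₀, -, hmin⟩ := hcont.exists_isMinOn_Ioo_of_tendsto_atTop (by norm_num) hleft hright
  refine ⟨1, one_pos, |g x₀| + 1, by positivity, fun r hr => ?_⟩
  have hx₀r : g x₀ ≤ g r := hmin hr
  linarith [neg_abs_le (g x₀)]

/-- Under assumption H1, the coercivity estimate F'(r)·r ≥ C₀r² - C₁ holds. -/
theorem stmt_1 (K : ℝ) (hK : 0 < K) (F F' F'' : ℝ → ℝ)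
    (hFcont : ContinuousOn F (Icc (-1:ℝ) 1))
    (hFnonneg : ∀ r ∈ Icc (-1:ℝ) 1, 0 ≤ F r)
    (hFC3 : ContDiffOn ℝ 3 F (Ioo (-1:ℝ) 1))
    (hd1 : ∀ r ∈ Ioo (-1:ℝ) 1, HasDerivAt F (F' r) r)
    (hd2 : ∀ r ∈ Ioo (-1:ℝ) 1, HasDerivAt F' (F'' r) r)
    (hF'0 : F' 0 = 0)
    (hlb : ∀ r ∈ Ioo (-1:ℝ) 1, -K ≤ F'' r)
    (htop : Tendsto F' (nhdsWithin 1 (Iio 1)) atTop)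
    (hbot : Tendsto F' (nhdsWithin (-1) (Ioi (-1))) atBot) :
    ∃ C₀ > (0:ℝ), ∃ C₁ > (0:ℝ), ∀ r ∈ Ioo (-1:ℝ) 1, F' r * r ≥ C₀ * r^2 - C₁ :=
  stmt_1_general F' F'' hd2 htop hbot
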